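/- arXiv:1407.4435 — 2 statements merged into one kernel-verified Lean document; each statement's English description precedes it below -/
import Mathlib

section
/- Let K be a number field with ring of integers O_K, let 𝔮 be a prime ideal of O_K not dividing 2, and let u, v, w ∈ O_K be non-zero with u + v + w = 0. Let j be the j-invariant of the elliptic curve E: y² = x(x − u)(x + v), so j = c₄³/Δ with c₄ = 16(u² − vw) and Δ = 16u²v²w². Then ord_𝔮(j) ≥ 0 if and only if ord_𝔮(u) = ord_𝔮(v) = ord_𝔮(w). Moreover, if these three valuations are not all equal, then ord_𝔮(j) = 6s − 2(ord_𝔮(u) + ord_𝔮(v) + ord_𝔮(w)) < 0, where s = min{ord_𝔮(u), ord_𝔮(v), ord_𝔮(w)}. -/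
/-!
Since `u + v + w = 0`, the ultrametric inequality forces the two smallest of `ord u, ord v, ord w`
to coincide. The quantity `c₄ / 16 = u² - vw = v² - wu = w² - uv` is symmetric, so writing it with
the remaining element squared shows `ord c₄ = 2s` when the three valuations are not all equal, whence
`ord j = 6s - 2(ord u + ord v + ord w) < 0`; when they all equal `s`, the bound `ord c₄ ≥ 2s` gives
`ord j ≥ 0`. The factor `16` is harmless because `𝔮 ∤ 2`.
-/

open NumberField IsDedekindDomain

open scoped Classical in
/-- The normalized `q`-adic valuation `ord_q : K → ℤ ∪ {+∞}` on the fraction field `K`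
of a Dedekind domain `R`, attached to a non-zero prime `q` of `R`; `ord_q (0) = +∞`. -/
noncomputable def ordAt {R : Type*} [CommRing R] [IsDedekindDomain R] {K : Type*} [Field K]
    [Algebra R K] [IsFractionRing R K] (q : HeightOneSpectrum R) (x : K) : WithTop ℤ :=
  if hx : x = 0 then ⊤
  else ((-Multiplicative.toAdd (WithZero.unzero (((q.valuation K).ne_zero_iff).mpr hx)) : ℤ) : WithTop ℤ)

section OrdAt

variable {R : Type*} [CommRing R] [IsDedekindDomain R] {K : Type*} [Field K] [Algebra R K]
  [IsFractionRing R K] (q : HeightOneSpectrum R)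

theorem ordAt_zero : ordAt q (0 : K) = ⊤ := dif_pos rfl

theorem ordAt_of_ne_zero {x : K} (hx : x ≠ 0) :
    ordAt q x = ((-WithZero.log (q.valuation K x) : ℤ) : WithTop ℤ) := by
  rw [ordAt, dif_neg hx, WithZero.toAdd_unzero_eq_log]

theorem ordAt_mul (x y : K) : ordAt q (x * y) = ordAt q x + ordAt q y := by
  rcases eq_or_ne x 0 with rfl | hx
  · simp [ordAt_zero]
  rcases eq_or_ne y 0 with rfl | hy
  · simp [ordAt_zero]
  rw [ordAt_of_ne_zero q (mul_ne_zero hx hy), ordAt_of_ne_zero q hx, ordAt_of_ne_zero q hy,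
    map_mul, WithZero.log_mul ((q.valuation K).ne_zero_iff.mpr hx)
      ((q.valuation K).ne_zero_iff.mpr hy)]
  norm_cast
  ring

theorem min_ordAt_le_ordAt_add (x y : K) : min (ordAt q x) (ordAt q y) ≤ ordAt q (x + y) := by
  rcases eq_or_ne x 0 with rfl | hx
  · simp [ordAt_zero]
  rcases eq_or_ne y 0 with rfl | hy
  · simp [ordAt_zero]
  rcases eq_or_ne (x + y) 0 with hxy | hxy
  · simp [hxy, ordAt_zero]
  have hle := (q.valuation K).map_add x y
  rw [le_max_iff, ← WithZero.log_le_log ((q.valuation K).ne_zero_iff.mpr hxy)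
      ((q.valuation K).ne_zero_iff.mpr hx), ← WithZero.log_le_log
      ((q.valuation K).ne_zero_iff.mpr hxy) ((q.valuation K).ne_zero_iff.mpr hy)] at hle
  rw [ordAt_of_ne_zero q hx, ordAt_of_ne_zero q hy, ordAt_of_ne_zero q hxy]
  norm_cast
  omega

theorem ordAt_one : ordAt q (1 : K) = 0 := by
  rw [ordAt_of_ne_zero q one_ne_zero, map_one, WithZero.log_one, neg_zero, WithTop.coe_zero]

noncomputable def ordAtAddValuation : AddValuation K (WithTop ℤ) :=
  AddValuation.of (ordAt q) (ordAt_zero q) (ordAt_one q) (min_ordAt_le_ordAt_add q) (ordAt_mul q)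

theorem ordAtAddValuation_apply (x : K) : ordAtAddValuation q x = ordAt q x := rfl

theorem ordAt_algebraMap_of_notMem {r : R} (hr : r ∉ q.asIdeal) :
    ordAt q (algebraMap R K r) = 0 := by
  have hv : q.valuation K (algebraMap R K r) = 1 := q.valuation_eq_one_iff_notMem.mpr hr
  rw [ordAt_of_ne_zero q ((q.valuation K).ne_zero_iff.mp (hv ▸ one_ne_zero)), hv,
    WithZero.log_one, neg_zero, WithTop.coe_zero]

end OrdAt

namespace AddValuation

section General

variable {R Γ₀ : Type*} [CommRing R] [LinearOrderedAddCommMonoidWithTop Γ₀]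
  (v : AddValuation R Γ₀) {x y z : R}

theorem min_le_map_of_add_add_eq_zero (h : x + y + z = 0) : min (v y) (v z) ≤ v x := by
  rw [show x = -(y + z) by linear_combination h, map_neg]
  exact v.map_add y z

theorem min_le_map_sq_sub_mul : min (2 • v x) (v y + v z) ≤ v (x ^ 2 - y * z) := by
  rw [← AddValuation.map_pow, ← AddValuation.map_mul]
  exact v.map_sub _ _

theorem map_sq_sub_mul_of_lt (h : v y + v z < 2 • v x) : v (x ^ 2 - y * z) = v y + v z := by
  rw [map_sub_eq_of_lt_right v (by rwa [AddValuation.map_pow, AddValuation.map_mul]),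
    AddValuation.map_mul]

end General

section IntValued

variable {R : Type*} [CommRing R] (v : AddValuation R (WithTop ℤ)) {x y z : R} {a b c : ℤ}

theorem two_mul_min_le_map_sq_sub_mul (ha : v x = a) (hb : v y = b) (hc : v z = c) :
    ((2 * min a (min b c) : ℤ) : WithTop ℤ) ≤ v (x ^ 2 - y * z) := by
  refine le_trans ?_ (v.min_le_map_sq_sub_mul (x := x) (y := y) (z := z))
  rw [ha, hb, hc, two_nsmul]
  norm_cast
  omega

theorem map_sq_sub_mul_of_eq_of_lt (ha : v x = a) (hb : v y = b) (hc : v z = b)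
    (hba : b < a) : v (x ^ 2 - y * z) = ((2 * b : ℤ) : WithTop ℤ) := by
  rw [v.map_sq_sub_mul_of_lt, hb, hc]
  · norm_cast; ring
  · rw [ha, hb, hc, two_nsmul]; norm_cast; omega

theorem isosceles_of_add_add_eq_zero (h : x + y + z = 0) (ha : v x = a)
    (hb : v y = b) (hc : v z = c) :
    (b = c ∧ b < a) ∨ (c = a ∧ c < b) ∨ (a = b ∧ a < c) ∨ (a = b ∧ b = c) := by
  have hmin_a := v.min_le_map_of_add_add_eq_zero h
  have hmin_b := v.min_le_map_of_add_add_eq_zero (show y + z + x = 0 by linear_combination h)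
  have hmin_c := v.min_le_map_of_add_add_eq_zero (show z + x + y = 0 by linear_combination h)
  rw [ha, hb, hc] at hmin_a hmin_b hmin_c
  norm_cast at hmin_a hmin_b hmin_c
  omega

theorem map_sq_sub_mul_of_not_all_eq (h : x + y + z = 0) (ha : v x = a)
    (hb : v y = b) (hc : v z = c) (hne : ¬(a = b ∧ b = c)) :
    v (x ^ 2 - y * z) = ((2 * min a (min b c) : ℤ) : WithTop ℤ) := by
  rcases v.isosceles_of_add_add_eq_zero h ha hb hc with
    ⟨rfl, hlt⟩ | ⟨rfl, hlt⟩ | ⟨rfl, hlt⟩ | hall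
  · rw [v.map_sq_sub_mul_of_eq_of_lt ha hb hc hlt]; congr 2; omega
  · rw [show x ^ 2 - y * z = y ^ 2 - z * x by linear_combination (x - y) * h,
      v.map_sq_sub_mul_of_eq_of_lt hb hc ha hlt]; congr 2; omega
  · rw [show x ^ 2 - y * z = z ^ 2 - x * y by linear_combination (x - z) * h,
      v.map_sq_sub_mul_of_eq_of_lt hc ha hb hlt]; congr 2; omega
  · exact (hne hall).elim

end IntValued

end AddValuation

/-- The `j`-invariant `c₄³ / Δ` of `Y² = X (X - x) (X + y)`. -/
def freyJ {K : Type*} [Field K] (x y z : K) : K :=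
  (16 * (x ^ 2 - y * z)) ^ 3 / (16 * x ^ 2 * y ^ 2 * z ^ 2)

namespace AddValuation

section FreyJ

variable {K : Type*} [Field K] (v : AddValuation K (WithTop ℤ)) {x y z : K} {a b c : ℤ}

theorem map_freyJ (h16 : v 16 = 0) (ha : v x = a) (hb : v y = b) (hc : v z = c) :
    v (freyJ x y z) = 3 • v (x ^ 2 - y * z) - ((2 * (a + b + c) : ℤ) : WithTop ℤ) := by
  simp only [freyJ, AddValuation.map_div, AddValuation.map_pow, AddValuation.map_mul, h16, ha, hb,
    hc, zero_add]
  norm_cast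
  ring_nf

theorem map_freyJ_nonneg_of_eq (h16 : v 16 = 0) (ha : v x = a) (hb : v y = a)
    (hc : v z = a) : 0 ≤ v (freyJ x y z) := by
  have hc4 := v.two_mul_min_le_map_sq_sub_mul ha hb hc
  rw [v.map_freyJ h16 ha hb hc]
  generalize v (x ^ 2 - y * z) = e at hc4
  induction e using WithTop.recTopCoe with
  | top => simp [succ_nsmul]
  | coe e =>
    norm_cast at hc4 ⊢
    rw [nsmul_eq_mul, Nat.cast_ofNat]
    omega

theorem map_freyJ_of_not_all_eq (h16 : v 16 = 0) (h : x + y + z = 0)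
    (ha : v x = a) (hb : v y = b) (hc : v z = c) (hne : ¬(a = b ∧ b = c)) :
    v (freyJ x y z) = ((6 * min a (min b c) - 2 * (a + b + c) : ℤ) : WithTop ℤ) ∧
      6 * min a (min b c) - 2 * (a + b + c) < 0 := by
  refine ⟨?_, by rcases v.isosceles_of_add_add_eq_zero h ha hb hc with h | h | h | h <;> omega⟩
  rw [v.map_freyJ h16 ha hb hc, v.map_sq_sub_mul_of_not_all_eq h ha hb hc hne]
  norm_cast
  ring_nf

end FreyJ

end AddValuation

/-- **Integrality of the `j`-invariant at odd primes (Lemma 3.2).**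
Let `K` be a number field, `𝔮` a prime of `𝓞 K` not dividing `2`, and `u, v, w ∈ 𝓞 K`
non-zero with `u + v + w = 0`. Let `j = c₄³/Δ` be the `j`-invariant of
`y² = x(x − u)(x + v)`, where `c₄ = 16(u² − vw)` and `Δ = 16u²v²w²`. Then
`ord_𝔮(j) ≥ 0` if and only if `ord_𝔮(u) = ord_𝔮(v) = ord_𝔮(w)`; and if these three
valuations are not all equal then
`ord_𝔮(j) = 6s − 2(ord_𝔮(u) + ord_𝔮(v) + ord_𝔮(w)) < 0`, where `s` is their minimum. -/
theorem j_invariant_integral_iff_equal_valuations (K : Type*) [Field K] [NumberField K]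
    (q : HeightOneSpectrum (𝓞 K)) (hq2 : (2 : 𝓞 K) ∉ q.asIdeal)
    (u v w : 𝓞 K) (hu : u ≠ 0) (hv : v ≠ 0) (hw : w ≠ 0) (hsum : u + v + w = 0)
    (j : K) (hj : j = (algebraMap (𝓞 K) K (16 * (u ^ 2 - v * w))) ^ 3 /
      algebraMap (𝓞 K) K (16 * u ^ 2 * v ^ 2 * w ^ 2)) :
    (0 ≤ ordAt q j ↔
      (ordAt q (algebraMap (𝓞 K) K u) = ordAt q (algebraMap (𝓞 K) K v) ∧
       ordAt q (algebraMap (𝓞 K) K v) = ordAt q (algebraMap (𝓞 K) K w))) ∧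
    (¬ (ordAt q (algebraMap (𝓞 K) K u) = ordAt q (algebraMap (𝓞 K) K v) ∧
        ordAt q (algebraMap (𝓞 K) K v) = ordAt q (algebraMap (𝓞 K) K w)) →
      ∃ tu tv tw : ℤ,
        ordAt q (algebraMap (𝓞 K) K u) = tu ∧
        ordAt q (algebraMap (𝓞 K) K v) = tv ∧
        ordAt q (algebraMap (𝓞 K) K w) = tw ∧
        ordAt q j = ((6 * min tu (min tv tw) - 2 * (tu + tv + tw) : ℤ) : WithTop ℤ) ∧
        6 * min tu (min tv tw) - 2 * (tu + tv + tw) < 0) := by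
  set ν := ordAtAddValuation (K := K) q
  have hinj := IsFractionRing.injective (𝓞 K) K
  obtain ⟨a, ha⟩ : ∃ a : ℤ, ordAt q (algebraMap (𝓞 K) K u) = a :=
    ⟨_, ordAt_of_ne_zero q ((map_ne_zero_iff _ hinj).mpr hu)⟩
  obtain ⟨b, hb⟩ : ∃ b : ℤ, ordAt q (algebraMap (𝓞 K) K v) = b :=
    ⟨_, ordAt_of_ne_zero q ((map_ne_zero_iff _ hinj).mpr hv)⟩
  obtain ⟨c, hc⟩ : ∃ c : ℤ, ordAt q (algebraMap (𝓞 K) K w) = c :=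
    ⟨_, ordAt_of_ne_zero q ((map_ne_zero_iff _ hinj).mpr hw)⟩
  have h16 : ν 16 = 0 := by
    have h16_notMem : (16 : 𝓞 K) ∉ q.asIdeal := fun h =>
      hq2 (q.isPrime.mem_of_pow_mem 4 (by rwa [show (2 : 𝓞 K) ^ 4 = 16 by norm_num]))
    have := ordAt_algebraMap_of_notMem (K := K) q h16_notMem
    rwa [map_ofNat] at this
  have hsum' : algebraMap (𝓞 K) K u + algebraMap (𝓞 K) K v + algebraMap (𝓞 K) K w = 0 := by
    rw [← map_add, ← map_add, hsum, map_zero]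
  have hjJ : j = freyJ (algebraMap (𝓞 K) K u) (algebraMap (𝓞 K) K v) (algebraMap (𝓞 K) K w) := by
    simp only [hj, freyJ, map_mul, map_sub, map_pow, map_ofNat]
  rw [ha, hb, hc, hjJ, ← ordAtAddValuation_apply]
  simp only [WithTop.coe_inj]
  by_cases hall : a = b ∧ b = c
  · obtain ⟨rfl, rfl⟩ := hall
    exact ⟨iff_of_true (ν.map_freyJ_nonneg_of_eq h16 ha hb hc) ⟨rfl, rfl⟩,
      fun hne => (hne ⟨rfl, rfl⟩).elim⟩
  · obtain ⟨hJ, hneg⟩ := ν.map_freyJ_of_not_all_eq h16 hsum' ha hb hc hall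
    refine ⟨iff_of_false ?_ hall, fun _ => ⟨a, b, c, rfl, rfl, rfl, hJ, hneg⟩⟩
    rw [hJ]
    exact_mod_cast hneg.not_ge
end

section
/- Let K be a number field with ring of integers O_K, let p be an odd prime, and let (a, b, c) ∈ O_K³ be a non-trivial solution of a^p + b^p + c^p = 0. Let 𝔮 be a prime ideal of O_K not dividing 2 which divides exactly one of a, b, c. Then the j-invariant j of the Frey curve E: Y² = X(X − a^p)(X + b^p) satisfies ord_𝔮(j) = −2p·ord_𝔮(abc) < 0; in particular p divides ord_𝔮(j). -/
/-
Since exactly one of `u = aᵖ`, `v = bᵖ`, `w = cᵖ` lies in `𝔮`, the congruence `u² ≡ vw (mod 𝔮)` is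
impossible, so `c₄ = 16(u² − vw)` is a `𝔮`-adic unit (as `𝔮 ∤ 2`). The discriminant is
`Δ = 16 (abc)^{2p}`, hence `ord_𝔮(j) = 3 ord_𝔮(c₄) − ord_𝔮(Δ) = −2p · ord_𝔮(abc)`, and
`ord_𝔮(abc) > 0` because `abc ∈ 𝔮`.
-/

open NumberField IsDedekindDomain

theorem Ideal.IsPrime.sq_sub_mul_notMem {R : Type*} [CommRing R] {P : Ideal R} (hP : P.IsPrime)
    {u v w : R} (h : (u ∈ P ∧ v ∉ P ∧ w ∉ P) ∨ (u ∉ P ∧ v ∈ P ∧ w ∉ P) ∨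
      (u ∉ P ∧ v ∉ P ∧ w ∈ P)) :
    u ^ 2 - v * w ∉ P := by
  intro hmem
  have hcongr : u ^ 2 ∈ P ↔ v * w ∈ P :=
    ⟨fun hu => by simpa using P.sub_mem hu hmem, fun hvw => by simpa using P.add_mem hmem hvw⟩
  rw [hP.mul_mem_iff_mem_or_mem, hP.pow_mem_iff_mem 2 two_pos] at hcongr
  tauto

section ordAt

variable {R : Type*} [CommRing R] [IsDedekindDomain R] {K : Type*} [Field K] [Algebra R K]
  [IsFractionRing R K] (q : HeightOneSpectrum R)

theorem ordAt_algebraMap {r : R} (hr : r ≠ 0) :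
    ordAt q (algebraMap R K r) = ((-WithZero.log (q.intValuation r) : ℤ) : WithTop ℤ) := by
  rw [ordAt_of_ne_zero q ((map_ne_zero_iff _ (IsFractionRing.injective R K)).mpr hr),
    HeightOneSpectrum.valuation_of_algebraMap]

theorem ordAt_algebraMap_div {r s : R} (hr : r ≠ 0) (hs : s ≠ 0) :
    ordAt q (algebraMap R K r / algebraMap R K s) =
      ((WithZero.log (q.intValuation s) - WithZero.log (q.intValuation r) : ℤ) : WithTop ℤ) := by
  have hinj := IsFractionRing.injective R K
  rw [ordAt_of_ne_zero q (div_ne_zero ((map_ne_zero_iff _ hinj).mpr hr)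
      ((map_ne_zero_iff _ hinj).mpr hs)), map_div₀,
    HeightOneSpectrum.valuation_of_algebraMap, HeightOneSpectrum.valuation_of_algebraMap,
    WithZero.log_div (q.intValuation_ne_zero r hr) (q.intValuation_ne_zero s hs), neg_sub]

theorem log_intValuation_neg_of_mem {r : R} (hr0 : r ≠ 0) (hr : r ∈ q.asIdeal) :
    WithZero.log (q.intValuation r) < 0 := by
  rw [WithZero.log_lt_iff_lt_exp (q.intValuation_ne_zero r hr0), WithZero.exp_zero]
  exact (q.intValuation_lt_one_iff_mem r).mpr hr

end ordAt

theorem frey_curve_j_valuation_multiplicative_prime_general (K : Type*) [Field K] [NumberField K]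
    (p : ℕ) (hp : p.Prime)
    (a b c : 𝓞 K) (habc : a * b * c ≠ 0)
    (q : HeightOneSpectrum (𝓞 K)) (hq2 : (2 : 𝓞 K) ∉ q.asIdeal)
    (hone : (a ∈ q.asIdeal ∧ b ∉ q.asIdeal ∧ c ∉ q.asIdeal) ∨
            (a ∉ q.asIdeal ∧ b ∈ q.asIdeal ∧ c ∉ q.asIdeal) ∨
            (a ∉ q.asIdeal ∧ b ∉ q.asIdeal ∧ c ∈ q.asIdeal))
    (j : K) (hj : j = (algebraMap (𝓞 K) K (16 * (a ^ (2 * p) - b ^ p * c ^ p))) ^ 3 /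
      algebraMap (𝓞 K) K (16 * a ^ (2 * p) * b ^ (2 * p) * c ^ (2 * p))) :
    ∃ t : ℤ, ordAt q (algebraMap (𝓞 K) K (a * b * c)) = t ∧
      ordAt q j = ((-(2 * p * t) : ℤ) : WithTop ℤ) ∧
      -(2 * (p : ℤ) * t) < 0 ∧
      (p : ℤ) ∣ -(2 * p * t) := by
  have hq : q.asIdeal.IsPrime := q.isPrime
  have h16 : (16 : 𝓞 K) ∉ q.asIdeal := fun h =>
    hq2 (hq.mem_of_pow_mem 4 (by rwa [show (2 : 𝓞 K) ^ 4 = 16 by norm_num]))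
  have hc4 : a ^ (2 * p) - b ^ p * c ^ p ∉ q.asIdeal := by
    rw [pow_mul']
    refine hq.sq_sub_mul_notMem ?_
    simpa only [hq.pow_mem_iff_mem p hp.pos] using hone
  have habcq : a * b * c ∈ q.asIdeal := by
    simp only [hq.mul_mem_iff_mem_or_mem]
    tauto
  have hΔ : 16 * a ^ (2 * p) * b ^ (2 * p) * c ^ (2 * p) = 16 * (a * b * c) ^ (2 * p) := by ring
  have hne : ∀ {r : 𝓞 K}, r ∉ q.asIdeal → r ≠ 0 := fun hr h => hr (h ▸ q.asIdeal.zero_mem)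
  refine ⟨-WithZero.log (q.intValuation (a * b * c)), ordAt_algebraMap q habc, ?_, ?_, ?_⟩
  · rw [hj, ← map_pow, hΔ, ordAt_algebraMap_div q (pow_ne_zero 3 (mul_ne_zero (hne h16) (hne hc4)))
      (mul_ne_zero (hne h16) (pow_ne_zero _ habc))]
    simp [HeightOneSpectrum.intValuation_eq_one_iff.mpr h16,
      HeightOneSpectrum.intValuation_eq_one_iff.mpr hc4]
  · have hv := log_intValuation_neg_of_mem q habc habcq
    have hp0 : (0 : ℤ) < p := by exact_mod_cast hp.pos
    nlinarith
  · exact dvd_neg.mpr ((dvd_mul_left _ _).mul_right _)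

/-- **The `j`-invariant of the Frey curve at odd multiplicative primes.**
Let `K` be a number field, `p` an odd prime, `(a, b, c)` a non-trivial solution of
`a ^ p + b ^ p + c ^ p = 0` in `𝓞 K`, and `𝔮 ∤ 2` a prime of `𝓞 K` dividing exactly
one of `a`, `b`, `c`. Then the `j`-invariant of the Frey curve
`Y² = X(X − aᵖ)(X + bᵖ)` satisfies `ord_𝔮(j) = −2p · ord_𝔮(abc) < 0`; in particular
`p ∣ ord_𝔮(j)`. -/
theorem frey_curve_j_valuation_multiplicative_prime (K : Type*) [Field K] [NumberField K]
    (p : ℕ) (hp : p.Prime) (hodd : Odd p)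
    (a b c : 𝓞 K) (habc : a * b * c ≠ 0) (hfermat : a ^ p + b ^ p + c ^ p = 0)
    (q : HeightOneSpectrum (𝓞 K)) (hq2 : (2 : 𝓞 K) ∉ q.asIdeal)
    (hone : (a ∈ q.asIdeal ∧ b ∉ q.asIdeal ∧ c ∉ q.asIdeal) ∨
            (a ∉ q.asIdeal ∧ b ∈ q.asIdeal ∧ c ∉ q.asIdeal) ∨
            (a ∉ q.asIdeal ∧ b ∉ q.asIdeal ∧ c ∈ q.asIdeal))
    (j : K) (hj : j = (algebraMap (𝓞 K) K (16 * (a ^ (2 * p) - b ^ p * c ^ p))) ^ 3 /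
      algebraMap (𝓞 K) K (16 * a ^ (2 * p) * b ^ (2 * p) * c ^ (2 * p))) :
    ∃ t : ℤ, ordAt q (algebraMap (𝓞 K) K (a * b * c)) = t ∧
      ordAt q j = ((-(2 * p * t) : ℤ) : WithTop ℤ) ∧
      -(2 * (p : ℤ) * t) < 0 ∧
      (p : ℤ) ∣ -(2 * p * t) :=
  frey_curve_j_valuation_multiplicative_prime_general K p hp a b c habc q hq2 hone j hj
end
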